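/- arXiv:2412.18304 — 5 statements merged into one kernel-verified Lean document; each statement's English description precedes it below -/
import Mathlib

section
/- Let t(x,y) = 4(1-x)(1-y) - (1-xy)^2. If a sequence {a_n} of positive reals satisfies: there exist an integer N and functions f_n, g_n such that for all n ≥ N, f_n < a_{n-1}a_{n+1}/a_n^2 < g_n, and t(f_n,f_{n+1}) > 0, t(f_n,g_{n+1}) > 0, t(g_n,f_{n+1}) > 0, t(g_n,g_{n+1}) > 0, then for all n ≥ N the sequence satisfies the higher order Turán inequality 4(a_n^2 - a_{n-1}a_{n+1})(a_{n+1}^2 - a_n a_{n+2}) - (a_n a_{n+1} - a_{n-1}a_{n+2})^2 ≥ 0. -/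
/-- t(x,y) = 4(1-x)(1-y) - (1-xy)^2 -/
def turan (x y : ℝ) : ℝ := 4 * (1 - x) * (1 - y) - (1 - x * y) ^ 2

lemma turan_symm (x y : ℝ) : turan x y = turan y x := by unfold turan; ring

lemma quad_pos (u v x y : ℝ) (h1 : u < x) (h2 : x < v)
    (hu : 0 < turan u y) (hv : 0 < turan v y) : 0 < turan x y := by
  have key : turan x y * (v - u)
      = (v - x) * turan u y + (x - u) * turan v y
        + y ^ 2 * (v - u) * (x - u) * (v - x) := by
    unfold turan; ring
  have h3 : (0:ℝ) < v - u := by linarith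
  have hmain : 0 < turan x y * (v - u) := by
    rw [key]
    have p1 := mul_pos (sub_pos.2 h2) hu
    have p2 := mul_pos (sub_pos.2 h1) hv
    have p3 : 0 ≤ y ^ 2 * (v - u) * (x - u) * (v - x) := by
      have := sq_nonneg y
      have h4 : (0:ℝ) ≤ x - u := by linarith
      have h5 : (0:ℝ) ≤ v - x := by linarith
      positivity
    linarith
  nlinarith [hmain, h3]

theorem stmt_0 (a f g : ℕ → ℝ) (N : ℕ) (hN : 1 ≤ N)
    (hpos : ∀ n, 0 < a n)
    (hbound : ∀ n, N ≤ n →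
      f n < a (n - 1) * a (n + 1) / (a n) ^ 2 ∧ a (n - 1) * a (n + 1) / (a n) ^ 2 < g n)
    (ht : ∀ n, N ≤ n →
      turan (f n) (f (n + 1)) > 0 ∧ turan (f n) (g (n + 1)) > 0 ∧
      turan (g n) (f (n + 1)) > 0 ∧ turan (g n) (g (n + 1)) > 0) :
    ∀ n, N ≤ n →
      4 * ((a n) ^ 2 - a (n - 1) * a (n + 1)) * ((a (n + 1)) ^ 2 - a n * a (n + 2))
        - (a n * a (n + 1) - a (n - 1) * a (n + 2)) ^ 2 ≥ 0 := by
  intro n hn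
  have han := hpos n
  have han1 := hpos (n + 1)
  have han2 := hpos (n + 2)
  have hanm := hpos (n - 1)
  obtain ⟨hf1, hg1⟩ := hbound n hn
  obtain ⟨hf2, hg2⟩ := hbound (n + 1) (le_trans hn (Nat.le_succ n))
  obtain ⟨t1, t2, t3, t4⟩ := ht n hn
  simp only [Nat.add_sub_cancel] at hf2 hg2
  set x := a (n - 1) * a (n + 1) / (a n) ^ 2 with hxdef
  set y := a n * a (n + 2) / (a (n + 1)) ^ 2 with hydef
  -- turan x y > 0
  have hfy : 0 < turan (f n) y := by
    rw [turan_symm]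
    exact quad_pos _ _ _ _ hf2 hg2 (by rw [turan_symm]; exact t1) (by rw [turan_symm]; exact t2)
  have hgy : 0 < turan (g n) y := by
    rw [turan_symm]
    exact quad_pos _ _ _ _ hf2 hg2 (by rw [turan_symm]; exact t3) (by rw [turan_symm]; exact t4)
  have hxy : 0 < turan x y := quad_pos _ _ _ _ hf1 hg1 hfy hgy
  -- algebraic identities
  have e1 : a (n - 1) * a (n + 1) = x * (a n) ^ 2 := by
    rw [hxdef, div_mul_cancel₀]
    positivity
  have e2 : a n * a (n + 2) = y * (a (n + 1)) ^ 2 := by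
    rw [hydef, div_mul_cancel₀]
    positivity
  have hC : a (n - 1) * a (n + 2) = x * y * (a n * a (n + 1)) := by
    rw [hxdef, hydef]
    field_simp
  have key : 4 * ((a n) ^ 2 - a (n - 1) * a (n + 1)) * ((a (n + 1)) ^ 2 - a n * a (n + 2))
        - (a n * a (n + 1) - a (n - 1) * a (n + 2)) ^ 2
      = (a n * a (n + 1)) ^ 2 * turan x y := by
    rw [e1, e2, hC]; unfold turan; ring
  rw [key]
  have : 0 < (a n * a (n + 1)) ^ 2 * turan x y := by
    apply mul_pos _ hxy
    positivity
  linarith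
end

section
/- If a positive real sequence {a_n} satisfies, for all n ≥ N, f_n < a_{n-1}a_{n+1}/a_n^2 < g_n and f_{n-1} f_n^2 f_{n+1} - 4 g_n + 3 > 0, where f_n, g_n are positive, then for all n ≥ N the sequence satisfies the Laguerre inequality of order two: (1/2)·[a_n a_{n+4} - 4 a_{n+1} a_{n+3} + 3 a_{n+2}^2] ≥ 0, i.e., 3 a_{n+2}^2 + a_n a_{n+4} - 4 a_{n+1} a_{n+3} ≥ 0. -/
theorem stmt_1 (a f g : ℕ → ℝ) (N : ℕ) (hN : 1 ≤ N)
    (hpos : ∀ n, 0 < a n)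
    (hfpos : ∀ n, N ≤ n → 0 < f n)
    (hgpos : ∀ n, N ≤ n → 0 < g n)
    (hbound : ∀ n, N ≤ n →
      f n < a (n - 1) * a (n + 1) / (a n) ^ 2 ∧ a (n - 1) * a (n + 1) / (a n) ^ 2 < g n)
    (hlag : ∀ n, N ≤ n → f (n - 1) * (f n) ^ 2 * f (n + 1) - 4 * g n + 3 > 0) :
    ∀ n, N ≤ n →
      3 * (a (n + 2)) ^ 2 - 4 * a (n + 1) * a (n + 3) + a n * a (n + 4) ≥ 0 := by
  intro n hn
  have hb1 := (hbound (n + 1) (by omega)).1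
  have hb2 := hbound (n + 2) (by omega)
  have hb3 := (hbound (n + 3) (by omega)).1
  have hl := hlag (n + 2) (by omega)
  simp only [Nat.add_sub_cancel] at hb1 hb2 hb3 hl
  have F1 : f (n + 1) * (a (n + 1)) ^ 2 < a n * a (n + 2) := by
    rwa [lt_div_iff₀ (pow_pos (hpos _) 2)] at hb1
  have F2 : f (n + 2) * (a (n + 2)) ^ 2 < a (n + 1) * a (n + 3) := by
    have := hb2.1
    rwa [lt_div_iff₀ (pow_pos (hpos _) 2)] at this
  have F3 : f (n + 3) * (a (n + 3)) ^ 2 < a (n + 2) * a (n + 4) := by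
    rwa [lt_div_iff₀ (pow_pos (hpos _) 2)] at hb3
  have G2 : a (n + 1) * a (n + 3) < g (n + 2) * (a (n + 2)) ^ 2 := by
    have := hb2.2
    rwa [div_lt_iff₀ (pow_pos (hpos _) 2)] at this
  have hf1 : 0 < f (n + 1) := hfpos _ (by omega)
  have hf2 : 0 < f (n + 2) := hfpos _ (by omega)
  have hf3 : 0 < f (n + 3) := hfpos _ (by omega)
  have p1 : (0:ℝ) < f (n + 1) * (a (n + 1)) ^ 2 := mul_pos hf1 (pow_pos (hpos _) 2)
  have p2 : (0:ℝ) < f (n + 2) * (a (n + 2)) ^ 2 := mul_pos hf2 (pow_pos (hpos _) 2)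
  have p3 : (0:ℝ) < f (n + 3) * (a (n + 3)) ^ 2 := mul_pos hf3 (pow_pos (hpos _) 2)
  have h12 := mul_lt_mul'' F1 F2 p1.le p2.le
  have h23 := mul_lt_mul'' F2 F3 p2.le p3.le
  have h := mul_lt_mul'' h12 h23 (mul_pos p1 p2).le (mul_pos p2 p3).le
  have key : f (n + 1) * (f (n + 2)) ^ 2 * f (n + 3) * (a (n + 2)) ^ 2 < a n * a (n + 4) := by
    have hc : (0:ℝ) < (a (n + 1)) ^ 2 * (a (n + 2)) ^ 2 * (a (n + 3)) ^ 2 := by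
      have := hpos (n+1); have := hpos (n+2); have := hpos (n+3); positivity
    rw [← mul_lt_mul_iff_of_pos_right hc]
    linear_combination h
  have hl' : (f (n + 1) * (f (n + 2)) ^ 2 * f (n + 3) - 4 * g (n + 2) + 3) * (a (n + 2)) ^ 2 > 0 :=
    mul_pos hl (pow_pos (hpos _) 2)
  nlinarith [key, G2, hl']
end

section
/- Let B_n denote the Baxter numbers defined by the recurrence (n+3)(n+4)B_{n+1} = (7n^2+21n+12)B_n + 8n(n-1)B_{n-1} with B_0 = B_1 = 1. Then for all n ≥ 3, 8^n·n^{-5} < B_n < 8^n·n^{-3}. -/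
/-!
With `b n = B n / 8 ^ n` the recurrence reads
`8 (n+3)(n+4) b (n+1) = (7n² + 21n + 12) b n + n (n-1) b (n-1)`, with positive coefficients,
so lower (upper) bounds on `b (n-1)` and `b n` pass to `b (n+1)`. The bounds `n⁻⁵ < b n < n⁻³`
therefore propagate once the recurrence maps `n⁻⁵` above `(n+1)⁻⁵` and `n⁻³` below `(n+1)⁻³`.
Cleared of denominators and written in `y = n - 5`, both comparisons are polynomials in `y`
with positive coefficients, so a two-step induction from `B 3 = 6`, `B 4 = 22`, `B 5 = 92`
proves the bounds.
-/

open scoped NNReal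

/-- The Baxter numbers, defined by the recurrence
`(n+3)(n+4) B_{n+1} = (7n^2+21n+12) B_n + 8n(n-1) B_{n-1}` with `B_0 = B_1 = 1`. -/
noncomputable def B : ℕ → ℝ
  | 0 => 1
  | 1 => 1
  | (m + 2) =>
      ((7 * ((m : ℝ) + 1) ^ 2 + 21 * ((m : ℝ) + 1) + 12) * B (m + 1)
        + 8 * ((m : ℝ) + 1) * (m : ℝ) * B m) / (((m : ℝ) + 4) * ((m : ℝ) + 5))

theorem B_add_two_div_eight_pow (m : ℕ) :
    B (m + 2) / 8 ^ (m + 2) =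
      ((7 * ((m : ℝ) + 1) ^ 2 + 21 * ((m : ℝ) + 1) + 12) * (B (m + 1) / 8 ^ (m + 1))
        + ((m : ℝ) + 1) * m * (B m / 8 ^ m)) / (8 * ((m : ℝ) + 4) * ((m : ℝ) + 5)) := by
  rw [B]
  field_simp
  ring

section Step

variable {x u v : ℝ}

theorem eight_mul_div_pow_five_lt_add (hx : 4 ≤ x) :
    8 * (x + 4) * (x + 5) / (x + 2) ^ 5
      < (7 * (x + 1) ^ 2 + 21 * (x + 1) + 12) / (x + 1) ^ 5 + (x + 1) * x / x ^ 5 := by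
  -- with `y : ℝ≥0`, `positivity` closes the expanded polynomial, whose coefficients are positive
  obtain ⟨y, rfl⟩ : ∃ y : ℝ≥0, x = y + 4 :=
    ⟨(x - 4).toNNReal, by rw [Real.coe_toNNReal _ (by linarith)]; ring⟩
  rw [div_add_div _ _ (by positivity) (by positivity),
    div_lt_div_iff₀ (by positivity) (by positivity), ← sub_pos]
  ring_nf
  positivity

theorem add_lt_eight_mul_div_pow_three (hx : 4 ≤ x) :
    (7 * (x + 1) ^ 2 + 21 * (x + 1) + 12) / (x + 1) ^ 3 + (x + 1) * x / x ^ 3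
      < 8 * (x + 4) * (x + 5) / (x + 2) ^ 3 := by
  obtain ⟨y, rfl⟩ : ∃ y : ℝ≥0, x = y + 4 :=
    ⟨(x - 4).toNNReal, by rw [Real.coe_toNNReal _ (by linarith)]; ring⟩
  rw [div_add_div _ _ (by positivity) (by positivity),
    div_lt_div_iff₀ (by positivity) (by positivity), ← sub_pos]
  ring_nf
  positivity

theorem one_div_pow_five_lt_recurrence (hx : 4 ≤ x) (hu : 1 / x ^ 5 < u)
    (hv : 1 / (x + 1) ^ 5 < v) :
    1 / (x + 2) ^ 5
      < ((7 * (x + 1) ^ 2 + 21 * (x + 1) + 12) * v + (x + 1) * x * u)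
          / (8 * (x + 4) * (x + 5)) := by
  rw [lt_div_iff₀ (by positivity)]
  calc 1 / (x + 2) ^ 5 * (8 * (x + 4) * (x + 5))
      = 8 * (x + 4) * (x + 5) / (x + 2) ^ 5 := by ring
    _ < (7 * (x + 1) ^ 2 + 21 * (x + 1) + 12) / (x + 1) ^ 5 + (x + 1) * x / x ^ 5 :=
      eight_mul_div_pow_five_lt_add hx
    _ = (7 * (x + 1) ^ 2 + 21 * (x + 1) + 12) * (1 / (x + 1) ^ 5)
          + (x + 1) * x * (1 / x ^ 5) := by ring
    _ < (7 * (x + 1) ^ 2 + 21 * (x + 1) + 12) * v + (x + 1) * x * u := by gcongr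

theorem recurrence_lt_one_div_pow_three (hx : 4 ≤ x) (hu : u < 1 / x ^ 3)
    (hv : v < 1 / (x + 1) ^ 3) :
    ((7 * (x + 1) ^ 2 + 21 * (x + 1) + 12) * v + (x + 1) * x * u)
        / (8 * (x + 4) * (x + 5))
      < 1 / (x + 2) ^ 3 := by
  rw [div_lt_iff₀ (by positivity)]
  calc (7 * (x + 1) ^ 2 + 21 * (x + 1) + 12) * v + (x + 1) * x * u
      < (7 * (x + 1) ^ 2 + 21 * (x + 1) + 12) * (1 / (x + 1) ^ 3)
          + (x + 1) * x * (1 / x ^ 3) := by gcongr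
    _ = (7 * (x + 1) ^ 2 + 21 * (x + 1) + 12) / (x + 1) ^ 3 + (x + 1) * x / x ^ 3 := by ring
    _ < 8 * (x + 4) * (x + 5) / (x + 2) ^ 3 := add_lt_eight_mul_div_pow_three hx
    _ = 1 / (x + 2) ^ 3 * (8 * (x + 4) * (x + 5)) := by ring

end Step

def BaxterBounds (n : ℕ) : Prop :=
  1 / (n : ℝ) ^ 5 < B n / 8 ^ n ∧ B n / 8 ^ n < 1 / (n : ℝ) ^ 3

theorem baxterBounds_iff (n : ℕ) :
    BaxterBounds n ↔ (8 : ℝ) ^ n / (n : ℝ) ^ 5 < B n ∧ B n < (8 : ℝ) ^ n / (n : ℝ) ^ 3 := by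
  rw [BaxterBounds, lt_div_iff₀ (by positivity), div_lt_iff₀ (by positivity),
    one_div_mul_eq_div, one_div_mul_eq_div]

theorem baxterBounds_add_two {m : ℕ} (hm : 4 ≤ m) (h₀ : BaxterBounds m)
    (h₁ : BaxterBounds (m + 1)) : BaxterBounds (m + 2) := by
  have hx : (4 : ℝ) ≤ m := by exact_mod_cast hm
  unfold BaxterBounds at *
  push_cast at *
  rw [B_add_two_div_eight_pow]
  exact ⟨one_div_pow_five_lt_recurrence hx h₀.1 h₁.1, recurrence_lt_one_div_pow_three hx h₀.2 h₁.2⟩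

theorem baxterBounds_three : BaxterBounds 3 := by norm_num [BaxterBounds, B]

theorem baxterBounds_four : BaxterBounds 4 := by norm_num [BaxterBounds, B]

theorem baxterBounds_five : BaxterBounds 5 := by norm_num [BaxterBounds, B]

theorem baxterBounds_add_four (m : ℕ) : BaxterBounds (m + 4) ∧ BaxterBounds (m + 5) := by
  induction m with
  | zero => exact ⟨baxterBounds_four, baxterBounds_five⟩
  | succ m ih => exact ⟨ih.2, baxterBounds_add_two (by omega) ih.1 ih.2⟩

theorem stmt_8 : ∀ n : ℕ, 3 ≤ n →
    (8 : ℝ) ^ n / (n : ℝ) ^ 5 < B n ∧ B n < (8 : ℝ) ^ n / (n : ℝ) ^ 3 := by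
  intro n hn
  rw [← baxterBounds_iff]
  obtain rfl | hn : n = 3 ∨ 4 ≤ n := by omega
  · exact baxterBounds_three
  · obtain ⟨m, rfl⟩ := Nat.exists_eq_add_of_le' hn
    exact (baxterBounds_add_four m).1
end

section
/- Suppose for a positive sequence {a_n} that F_n < (a_{n-1})^{1/(n-1)}·(a_{n+1})^{1/(n+1)}/((a_n)^{1/n})^2 < G_n for all n ≥ N with positive functions F_n, G_n. Set p_n = (n/(n+1))·F_n and q_n = (n/(n+1))·G_n, and let t(x,y) = 4(1-x)(1-y) - (1-xy)^2. If t(p_n,p_{n+1}) > 0, t(p_n,q_{n+1}) > 0, t(q_n,p_{n+1}) > 0, t(q_n,q_{n+1}) > 0 for all n ≥ N, then the sequence b_n = (a_n)^{1/n}/n! satisfies the higher order Turán inequality 4(b_n^2 - b_{n-1}b_{n+1})(b_{n+1}^2 - b_n b_{n+2}) - (b_n b_{n+1} - b_{n-1}b_{n+2})^2 ≥ 0 for all n ≥ N. -/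
lemma turan_x (p q P x : ℝ) (hx1 : p < x) (hx2 : x < q)
    (h1 : 0 < turan p P) (h3 : 0 < turan q P) : 0 < turan x P := by
  simp only [turan] at *
  nlinarith [mul_pos (sub_pos.2 hx2) h1, mul_pos (sub_pos.2 hx1) h3,
    mul_nonneg (mul_nonneg (sq_nonneg P) (sub_pos.2 hx1).le) (sub_pos.2 hx2).le,
    sub_pos.2 (hx1.trans hx2)]

lemma turan_y (x P Q y : ℝ) (hy1 : P < y) (hy2 : y < Q)
    (h1 : 0 < turan x P) (h2 : 0 < turan x Q) : 0 < turan x y := by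
  simp only [turan] at *
  nlinarith [mul_pos (sub_pos.2 hy2) h1, mul_pos (sub_pos.2 hy1) h2,
    mul_nonneg (mul_nonneg (sq_nonneg x) (sub_pos.2 hy1).le) (sub_pos.2 hy2).le,
    sub_pos.2 (hy1.trans hy2)]

lemma ratio (a b : ℕ → ℝ) (hpos : ∀ n, 0 < a n)
    (hb : ∀ n, b n = (a n) ^ ((1 : ℝ) / (n : ℝ)) / (n.factorial : ℝ))
    (n : ℕ) (hn : 1 ≤ n) :
    b (n - 1) * b (n + 1) / (b n) ^ 2 =
      ((n : ℝ) / ((n : ℝ) + 1)) *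
        ((a (n - 1)) ^ ((1 : ℝ) / ((n : ℝ) - 1)) * (a (n + 1)) ^ ((1 : ℝ) / ((n : ℝ) + 1))
          / ((a n) ^ ((1 : ℝ) / (n : ℝ))) ^ 2) := by
  have hc : ((n - 1 : ℕ) : ℝ) = (n : ℝ) - 1 := by
    push_cast [Nat.cast_sub hn]; ring
  have hf1 : (n.factorial : ℝ) = (n : ℝ) * ((n - 1).factorial : ℝ) := by
    have : n.factorial = n * (n-1).factorial := by
      cases n with
      | zero => omega
      | succ m => simp [Nat.factorial_succ]
    exact_mod_cast congrArg (Nat.cast : ℕ → ℝ) this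
  have hf2 : ((n + 1).factorial : ℝ) = ((n : ℝ) + 1) * (n.factorial : ℝ) := by
    rw [Nat.factorial_succ]; push_cast; ring
  have hA : (0:ℝ) < (a (n-1)) ^ ((1 : ℝ) / ((n : ℝ) - 1)) := Real.rpow_pos_of_pos (hpos _) _
  have hB : (0:ℝ) < (a n) ^ ((1 : ℝ) / (n : ℝ)) := Real.rpow_pos_of_pos (hpos _) _
  have hC : (0:ℝ) < (a (n+1)) ^ ((1 : ℝ) / ((n : ℝ) + 1)) := Real.rpow_pos_of_pos (hpos _) _
  have hfac : (0:ℝ) < ((n-1).factorial : ℝ) := by exact_mod_cast (n-1).factorial_pos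
  have hn0 : (0:ℝ) < (n:ℝ) := by exact_mod_cast hn
  rw [hb, hb, hb]
  push_cast
  rw [hc, hf2, hf1]
  field_simp

theorem stmt_9 (a F G : ℕ → ℝ) (N : ℕ) (hN : 2 ≤ N)
    (hpos : ∀ n, 0 < a n)
    (hFpos : ∀ n, N ≤ n → 0 < F n) (hGpos : ∀ n, N ≤ n → 0 < G n)
    (hbound : ∀ n, N ≤ n →
      F n < (a (n - 1)) ^ ((1 : ℝ) / ((n : ℝ) - 1)) * (a (n + 1)) ^ ((1 : ℝ) / ((n : ℝ) + 1))
              / ((a n) ^ ((1 : ℝ) / (n : ℝ))) ^ 2 ∧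
      (a (n - 1)) ^ ((1 : ℝ) / ((n : ℝ) - 1)) * (a (n + 1)) ^ ((1 : ℝ) / ((n : ℝ) + 1))
              / ((a n) ^ ((1 : ℝ) / (n : ℝ))) ^ 2 < G n)
    (p : ℕ → ℝ) (hp : ∀ n, p n = ((n : ℝ) / ((n : ℝ) + 1)) * F n)
    (q : ℕ → ℝ) (hq : ∀ n, q n = ((n : ℝ) / ((n : ℝ) + 1)) * G n)
    (ht : ∀ n, N ≤ n →
      turan (p n) (p (n + 1)) > 0 ∧ turan (p n) (q (n + 1)) > 0 ∧
      turan (q n) (p (n + 1)) > 0 ∧ turan (q n) (q (n + 1)) > 0)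
    (b : ℕ → ℝ) (hb : ∀ n, b n = (a n) ^ ((1 : ℝ) / (n : ℝ)) / (n.factorial : ℝ)) :
    ∀ n, N ≤ n →
      4 * ((b n) ^ 2 - b (n - 1) * b (n + 1)) * ((b (n + 1)) ^ 2 - b n * b (n + 2))
        - (b n * b (n + 1) - b (n - 1) * b (n + 2)) ^ 2 ≥ 0 := by
  intro n hn
  have hn1 : 1 ≤ n := le_trans (by omega) hn
  have hbpos : ∀ m, 0 < b m := fun m => by
    rw [hb]
    exact div_pos (Real.rpow_pos_of_pos (hpos m) _) (by exact_mod_cast m.factorial_pos)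
  have hcoef : ∀ m : ℕ, 1 ≤ m → (0:ℝ) < (m : ℝ) / ((m : ℝ) + 1) := by
    intro m hm
    have : (0:ℝ) < (m:ℝ) := by exact_mod_cast hm
    positivity
  -- x bounds
  have hr1 := ratio a b hpos hb n hn1
  have hr2 := ratio a b hpos hb (n+1) (by omega)
  simp only [Nat.add_sub_cancel] at hr2
  have hx1 : p n < b (n - 1) * b (n + 1) / (b n) ^ 2 := by
    rw [hp, hr1]
    exact mul_lt_mul_of_pos_left (hbound n hn).1 (hcoef n hn1)
  have hx2 : b (n - 1) * b (n + 1) / (b n) ^ 2 < q n := by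
    rw [hq, hr1]
    exact mul_lt_mul_of_pos_left (hbound n hn).2 (hcoef n hn1)
  have hy1 : p (n+1) < b n * b (n + 2) / (b (n+1)) ^ 2 := by
    rw [hp, hr2]
    have h := (hbound (n+1) (by omega)).1
    simp only [Nat.add_sub_cancel] at h
    exact mul_lt_mul_of_pos_left h (hcoef (n+1) (by omega))
  have hy2 : b n * b (n + 2) / (b (n+1)) ^ 2 < q (n+1) := by
    rw [hq, hr2]
    have h := (hbound (n+1) (by omega)).2
    simp only [Nat.add_sub_cancel] at h
    exact mul_lt_mul_of_pos_left h (hcoef (n+1) (by omega))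
  obtain ⟨h1, h2, h3, h4⟩ := ht n hn
  have hxP := turan_x (p n) (q n) (p (n+1)) _ hx1 hx2 h1 h3
  have hxQ := turan_x (p n) (q n) (q (n+1)) _ hx1 hx2 h2 h4
  have hT := turan_y _ (p (n+1)) (q (n+1)) _ hy1 hy2 hxP hxQ
  have hbn := (hbpos n).ne'
  have hbn1 := (hbpos (n+1)).ne'
  have key : 4 * ((b n) ^ 2 - b (n - 1) * b (n + 1)) * ((b (n + 1)) ^ 2 - b n * b (n + 2))
        - (b n * b (n + 1) - b (n - 1) * b (n + 2)) ^ 2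
      = (b n) ^ 2 * (b (n+1)) ^ 2 *
        turan (b (n - 1) * b (n + 1) / (b n) ^ 2) (b n * b (n + 2) / (b (n+1)) ^ 2) := by
    simp only [turan]
    field_simp
  rw [key]
  positivity
end

section
/- Let H_n denote the number of n×n (0,1)-matrices with every row sum and every column sum equal to 2. Then for n ≥ 2, 2 H_n = 2n(n-1) H_{n-1} + n(n-1)^2 H_{n-2}, with H_0 = 1, H_1 = 0, H_2 = 1, H_3 = 6. -/
/-- The number of `n × n` `(0,1)`-matrices with every row sum and column sum equal to 2. -/
noncomputable def H (n : ℕ) : ℕ :=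
  Nat.card {M : Matrix (Fin n) (Fin n) ℕ //
    (∀ i j, M i j ≤ 1) ∧ (∀ i, ∑ j, M i j = 2) ∧ (∀ j, ∑ i, M i j = 2)}


open Finset

namespace H13

/-! ### Generic sum helpers -/

section sums
variable {β M : Type*} [Fintype β] [AddCommMonoid M]

lemma sum_dite_subtype (P : β → Prop) [DecidablePred P] (f : ∀ j, P j → M) :
    (∑ j, if h : P j then f j h else 0) = ∑ x : Subtype P, f x x.2 := by
  classical
  rw [← Finset.sum_filter_of_ne (p := P) (by intro x _ h; by_contra hP; simp [hP] at h)]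
  rw [Finset.sum_subtype (p := P) (Finset.univ.filter P) (by simp) (fun j => if h : P j then f j h else 0)]
  exact Finset.sum_congr rfl (fun x _ => dif_pos x.2)

lemma sum_eq_add_sum_ne [DecidableEq β] (f : β → M) (a : β) :
    ∑ j, f j = f a + ∑ x : {j // j ≠ a}, f ↑x := by
  classical
  rw [← Finset.sum_subtype (Finset.univ.erase a) (by intro x; simp) f]
  rw [Finset.add_sum_erase _ f (Finset.mem_univ a)]

lemma sum_eq_add_add_sum_ne [DecidableEq β] (f : β → M) {a b : β} (hab : a ≠ b) :
    ∑ j, f j = f a + (f b + ∑ x : {j // j ≠ a ∧ j ≠ b}, f ↑x) := by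
  classical
  rw [← Finset.sum_subtype ((Finset.univ.erase a).erase b)
    (by intro x; simp [Finset.mem_erase]; tauto) f]
  rw [Finset.add_sum_erase _ f (by simp [Ne.symm hab])]
  rw [Finset.add_sum_erase _ f (Finset.mem_univ a)]

lemma sum_ite_pair {a b : β} [DecidableEq β] (hab : a ≠ b) :
    (∑ j, if j = a ∨ j = b then (1 : ℕ) else 0) = 2 := by
  classical
  rw [Finset.sum_boole]
  norm_num
  have : Finset.univ.filter (fun j => j = a ∨ j = b) = {a, b} := by
    ext j; simp
  rw [this, Finset.card_insert_of_notMem (by simp [hab]), Finset.card_singleton]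

end sums

/-! ### Support lemmas for rows/columns -/

section support
variable {β : Type*} [Fintype β] [DecidableEq β]

lemma exists_pair {f : β → ℕ} (h1 : ∀ j, f j ≤ 1) (h2 : ∑ j, f j = 2) :
    ∃ a b, a ≠ b ∧ f a = 1 ∧ f b = 1 := by
  classical
  have ha : ∃ a, f a ≠ 0 := by
    by_contra h
    push_neg at h
    simp [h] at h2
  obtain ⟨a, ha⟩ := ha
  have fa : f a = 1 := le_antisymm (h1 a) (Nat.one_le_iff_ne_zero.2 ha)
  have h3 : ∑ j ∈ Finset.univ.erase a, f j = 1 := by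
    have := Finset.add_sum_erase Finset.univ f (Finset.mem_univ a)
    omega
  have hb : ∃ b ∈ Finset.univ.erase a, f b ≠ 0 := by
    by_contra h
    push_neg at h
    rw [Finset.sum_eq_zero h] at h3
    omega
  obtain ⟨b, hb, hfb⟩ := hb
  exact ⟨a, b, (Finset.ne_of_mem_erase hb).symm, fa,
    le_antisymm (h1 b) (Nat.one_le_iff_ne_zero.2 hfb)⟩

lemma pair_rigid {f : β → ℕ} (h1 : ∀ j, f j ≤ 1) (h2 : ∑ j, f j = 2)
    {a b : β} (hab : a ≠ b) (ha : f a = 1) (hb : f b = 1) (j : β) :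
    f j = if j = a ∨ j = b then 1 else 0 := by
  by_cases hj : j = a ∨ j = b
  · rcases hj with rfl | rfl <;> simp [ha, hb]
  · push_neg at hj
    simp only [hj, or_self, if_neg, if_false]
    rcases hj with ⟨hja, hjb⟩
    rw [sum_eq_add_add_sum_ne f hab] at h2
    have hmem : (⟨j, hja, hjb⟩ : {x // x ≠ a ∧ x ≠ b}) ∈ Finset.univ := Finset.mem_univ _
    have := Finset.single_le_sum (f := fun x : {x // x ≠ a ∧ x ≠ b} => f ↑x)
      (fun x _ => Nat.zero_le _) hmem
    simp only at this
    omega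

/-- From one entry equal to `1`, there is a unique *other* entry equal to `1`. -/
lemma exists_unique_other {f : β → ℕ} (h1 : ∀ j, f j ≤ 1) (h2 : ∑ j, f j = 2)
    {a0 : β} (h0 : f a0 = 1) :
    ∃ r, r ≠ a0 ∧ f r = 1 ∧ ∀ j, j ≠ a0 → f j = 1 → j = r := by
  obtain ⟨a, b, hab, ha, hb⟩ := exists_pair h1 h2
  have rigid := pair_rigid h1 h2 hab ha hb
  have h0' : a0 = a ∨ a0 = b := by
    by_contra h
    push_neg at h
    have := rigid a0
    simp [h.1, h.2, h0] at this
  rcases h0' with rfl | rfl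
  · refine ⟨b, Ne.symm hab, hb, fun j hj hfj => ?_⟩
    have hthis := rigid j
    rw [hfj] at hthis
    split_ifs at hthis with h
    tauto
  · refine ⟨a, hab, ha, fun j hj hfj => ?_⟩
    have hthis := rigid j
    rw [hfj] at hthis
    split_ifs at hthis with h
    tauto

end support

/-! ### The structure -/

variable (α β : Type*) [Fintype α] [Fintype β]

def Cond (M : α → β → ℕ) : Prop :=
  (∀ i j, M i j ≤ 1) ∧ (∀ i, ∑ j, M i j = 2) ∧ (∀ j, ∑ i, M i j = 2)

def S := {M : α → β → ℕ // Cond α β M}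

attribute [reducible] S

instance : Finite (S α β) := by
  apply Finite.of_injective (fun M : S α β => fun i j =>
    (⟨M.1 i j, lt_of_le_of_lt (M.2.1 i j) one_lt_two⟩ : Fin 2))
  intro M N h
  exact Subtype.ext (funext fun i => funext fun j =>
    congrArg Fin.val (congrFun (congrFun h i) j))

variable {α β}

lemma H_eq (n : ℕ) : H n = Nat.card (S (Fin n) (Fin n)) := rfl

def SEquiv {α' β' : Type*} [Fintype α'] [Fintype β'] (e : α ≃ α') (g : β ≃ β') :
    S α β ≃ S α' β' where
  toFun M := ⟨fun i j => M.1 (e.symm i) (g.symm j), by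
    obtain ⟨M, h1, h2, h3⟩ := M
    refine ⟨fun i j => h1 _ _, fun i => ?_, fun j => ?_⟩
    · rw [Equiv.sum_comp g.symm (fun j => M (e.symm i) j)]; exact h2 _
    · rw [Equiv.sum_comp e.symm (fun i => M i (g.symm j))]; exact h3 _⟩
  invFun M := ⟨fun i j => M.1 (e i) (g j), by
    obtain ⟨M, h1, h2, h3⟩ := M
    refine ⟨fun i j => h1 _ _, fun i => ?_, fun j => ?_⟩
    · rw [Equiv.sum_comp g (fun j => M (e i) j)]; exact h2 _
    · rw [Equiv.sum_comp e (fun i => M i (g j))]; exact h3 _⟩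
  left_inv M := by apply Subtype.ext; funext i j; simp
  right_inv M := by apply Subtype.ext; funext i j; simp

lemma card_S_eq_H {n : ℕ} (hα : Fintype.card α = n) (hβ : Fintype.card β = n) :
    Nat.card (S α β) = H n := by
  rw [H_eq]
  exact Nat.card_congr (SEquiv (Fintype.equivFinOfCardEq hα) (Fintype.equivFinOfCardEq hβ))

/-! ### Nat.card of sigma types -/

lemma natcard_sigma {ι : Type*} [Fintype ι] (f : ι → Type*) [∀ i, Finite (f i)] :
    Nat.card (Σ i, f i) = ∑ i, Nat.card (f i) := by
  letI : ∀ i, Fintype (f i) := fun i => Fintype.ofFinite (f i)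
  simp [Nat.card_eq_fintype_card, Fintype.card_sigma]

/-! ### Fiber cardinalities -/

section fibers
variable [DecidableEq β]

lemma card_support_two {f : β → ℕ} (h1 : ∀ j, f j ≤ 1) (h2 : ∑ j, f j = 2) :
    Nat.card {j // f j = 1} = 2 := by
  classical
  obtain ⟨a, b, hab, ha, hb⟩ := exists_pair h1 h2
  have rigid := pair_rigid h1 h2 hab ha hb
  have : {j // f j = 1} ≃ Bool :=
    { toFun := fun j => decide (j.1 = a)
      invFun := fun x => if x then ⟨a, ha⟩ else ⟨b, hb⟩
      left_inv := by
        rintro ⟨j, hj⟩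
        have := rigid j
        rw [hj] at this
        split_ifs at this with h
        rcases h with rfl | rfl <;> simp [hab, Ne.symm hab]
      right_inv := by
        rintro (_|_) <;> simp [hab, Ne.symm hab] }
  rw [Nat.card_congr this]
  simp

lemma card_pairs_two {f : β → ℕ} (h1 : ∀ j, f j ≤ 1) (h2 : ∑ j, f j = 2) :
    Nat.card {p : β × β // p.1 ≠ p.2 ∧ f p.1 = 1 ∧ f p.2 = 1} = 2 := by
  classical
  obtain ⟨a, b, hab, ha, hb⟩ := exists_pair h1 h2
  have rigid := pair_rigid h1 h2 hab ha hb
  have mem : ∀ j, f j = 1 → j = a ∨ j = b := by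
    intro j hj
    have := rigid j
    rw [hj] at this
    split_ifs at this with h
    exact h
  have : {p : β × β // p.1 ≠ p.2 ∧ f p.1 = 1 ∧ f p.2 = 1} ≃ Bool :=
    { toFun := fun p => decide (p.1.1 = a)
      invFun := fun x => if x then ⟨(a, b), hab, ha, hb⟩ else ⟨(b, a), Ne.symm hab, hb, ha⟩
      left_inv := by
        rintro ⟨⟨p, q⟩, hpq, hp, hq⟩
        rcases mem p hp with rfl | rfl <;> rcases mem q hq with rfl | rfl
        · exact absurd rfl hpq
        · simp [hab, Ne.symm hab]
        · simp [hab, Ne.symm hab]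
        · exact absurd rfl hpq
      right_inv := by
        rintro (_|_) <;> simp [hab, Ne.symm hab] }
  rw [Nat.card_congr this]
  simp

end fibers

/-! ### Subtype cardinalities -/

lemma card_ne_one [DecidableEq β] (a : β) :
    Fintype.card {j : β // j ≠ a} = Fintype.card β - 1 := by
  rw [Fintype.card_subtype_compl (p := (· = a))]
  simp

lemma card_ne_two [DecidableEq β] {a b : β} (hab : a ≠ b) :
    Fintype.card {j : β // j ≠ a ∧ j ≠ b} = Fintype.card β - 2 := by
  classical
  rw [Fintype.card_subtype]
  have : Finset.univ.filter (fun j : β => j ≠ a ∧ j ≠ b) = Finset.univ \ {a, b} := by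
    ext j; simp
  rw [this, Finset.card_sdiff_of_subset (by simp)]
  have h2 : ({a, b} : Finset β).card = 2 := by
    rw [Finset.card_insert_of_notMem (by simp [hab])]
    rfl
  rw [h2, Finset.card_univ]

lemma card_offdiag [DecidableEq β] : Fintype.card {p : β × β // p.1 ≠ p.2} =
    Fintype.card β * Fintype.card β - Fintype.card β := by
  classical
  have hd : (Finset.univ.filter (fun p : β × β => p.1 = p.2)).card = Fintype.card β := by
    rw [← Fintype.card_subtype]
    apply Fintype.card_congr
    exact { toFun := fun p => p.1.1
            invFun := fun x => ⟨(x, x), rfl⟩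
            left_inv := by
              rintro ⟨⟨x, y⟩, h⟩
              obtain rfl : x = y := h
              rfl
            right_inv := by intro x; rfl }
  rw [Fintype.card_subtype]
  have : Finset.univ.filter (fun p : β × β => p.1 ≠ p.2)
      = Finset.univ \ Finset.univ.filter (fun p : β × β => p.1 = p.2) := by
    rw [← Finset.filter_not]
  rw [this, Finset.card_sdiff_of_subset (Finset.filter_subset _ _), hd, Finset.card_univ,
    Fintype.card_prod]

/-! ### Sigma card helpers -/

lemma natcard_sigma_const {ι : Type*} [Finite ι] (f : ι → Type*) [∀ i, Finite (f i)] (c : ℕ)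
    (h : ∀ i, Nat.card (f i) = c) : Nat.card (Σ i, f i) = c * Nat.card ι := by
  letI : Fintype ι := Fintype.ofFinite ι
  letI : ∀ i, Fintype (f i) := fun i => Fintype.ofFinite _
  rw [Nat.card_eq_fintype_card, Fintype.card_sigma, Nat.card_eq_fintype_card]
  have : ∀ i : ι, Fintype.card (f i) = c := by
    intro i; rw [← Nat.card_eq_fintype_card]; exact h i
  rw [Finset.sum_congr rfl (fun i _ => this i), Finset.sum_const, Finset.card_univ,
    smul_eq_mul, mul_comm]

lemma natcard_split (A : Type*) [Finite A] (P : A → Prop) :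
    Nat.card A = Nat.card {x // P x} + Nat.card {x // ¬ P x} := by
  classical
  rw [← Nat.card_sum]
  exact (Nat.card_congr (Equiv.sumCompl P)).symm

lemma sigma_eq {A : Type*} {F : A → Type*} {a b : A} {x : F a} {y : F b}
    (h : a = b) (h2 : HEq x y) : (⟨a, x⟩ : Σ a, F a) = ⟨b, y⟩ := by
  subst h; cases h2; rfl

/-! ### The marked set `T` -/

section Key
variable {k : ℕ}

def T (k : ℕ) :=
  Σ M : S (Option (Fin (k+1))) (Fin (k+2)),
    {p : Fin (k+2) × Fin (k+2) //
      p.1 ≠ p.2 ∧ M.1 none p.1 = 1 ∧ M.1 none p.2 = 1}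

instance : Finite (T k) := by unfold T; infer_instance

lemma card_T : Nat.card (T k) = 2 * H (k+2) := by
  rw [T, natcard_sigma_const _ 2 (fun M =>
    card_pairs_two (fun j => M.2.1 none j) (M.2.2.1 none))]
  congr 1
  exact card_S_eq_H (by simp) (by simp)

/-! ### Extracting the unique other row of a marked column -/

lemma exists_otherRow (M : S (Option (Fin (k+1))) (Fin (k+2))) (a : Fin (k+2))
    (h : M.1 none a = 1) :
    ∃ r : Fin (k+1), M.1 (some r) a = 1 ∧ ∀ i, M.1 (some i) a = 1 → i = r := by
  obtain ⟨r', hne, h1, huniq⟩ := exists_unique_other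
    (f := fun i => M.1 i a) (fun i => M.2.1 i a) (M.2.2.2 a) h
  match r', hne, h1, huniq with
  | none, hne, _, _ => exact absurd rfl hne
  | some r, hne, h1, huniq =>
    exact ⟨r, h1, fun i hi => Option.some_injective _ (huniq (some i) (by simp) hi)⟩

noncomputable def otherRow (M : S (Option (Fin (k+1))) (Fin (k+2))) (a : Fin (k+2))
    (h : M.1 none a = 1) : Fin (k+1) :=
  (exists_otherRow M a h).choose

lemma otherRow_one (M : S (Option (Fin (k+1))) (Fin (k+2))) (a : Fin (k+2))
    (h : M.1 none a = 1) : M.1 (some (otherRow M a h)) a = 1 :=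
  (exists_otherRow M a h).choose_spec.1

lemma otherRow_uniq (M : S (Option (Fin (k+1))) (Fin (k+2))) (a : Fin (k+2))
    (h : M.1 none a = 1) {i : Fin (k+1)} (hi : M.1 (some i) a = 1) :
    i = otherRow M a h :=
  (exists_otherRow M a h).choose_spec.2 i hi

lemma otherRow_zero (M : S (Option (Fin (k+1))) (Fin (k+2))) (a : Fin (k+2))
    (h : M.1 none a = 1) {i : Fin (k+1)} (hi : i ≠ otherRow M a h) :
    M.1 (some i) a = 0 := by
  have hle := M.2.1 (some i) a
  rcases Nat.lt_or_ge (M.1 (some i) a) 1 with h' | h'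
  · omega
  · have : M.1 (some i) a = 1 := le_antisymm hle h'
    exact absurd (otherRow_uniq M a h this) hi

end Key

section Case1
variable {k : ℕ}

def C1 (x : T k) : Prop :=
  ∃ i, x.1.1 (some i) x.2.1.1 = 1 ∧ x.1.1 (some i) x.2.1.2 = 1

def TC1 (k : ℕ) :=
  Σ q : ({p : Fin (k+2) × Fin (k+2) // p.1 ≠ p.2} × Fin (k+1)),
    S {i : Fin (k+1) // i ≠ q.2} {j : Fin (k+2) // j ≠ q.1.1.1 ∧ j ≠ q.1.1.2}

instance : Finite (TC1 k) := by unfold TC1; infer_instance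

/-- The extension matrix in case 1. -/
def N1 (a b : Fin (k+2)) (r : Fin (k+1))
    (M' : S {i : Fin (k+1) // i ≠ r} {j : Fin (k+2) // j ≠ a ∧ j ≠ b}) :
    Option (Fin (k+1)) → Fin (k+2) → ℕ
  | none, j => if j = a ∨ j = b then 1 else 0
  | some i, j =>
      if hi : i = r then (if j = a ∨ j = b then 1 else 0)
      else if hj : j ≠ a ∧ j ≠ b then M'.1 ⟨i, hi⟩ ⟨j, hj⟩ else 0

lemma N1_none (a b : Fin (k+2)) (r : Fin (k+1))
    (M' : S {i : Fin (k+1) // i ≠ r} {j : Fin (k+2) // j ≠ a ∧ j ≠ b}) (j : Fin (k+2)) :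
    N1 a b r M' none j = if j = a ∨ j = b then 1 else 0 := rfl

lemma N1_some (a b : Fin (k+2)) (r : Fin (k+1))
    (M' : S {i : Fin (k+1) // i ≠ r} {j : Fin (k+2) // j ≠ a ∧ j ≠ b})
    (i : Fin (k+1)) (j : Fin (k+2)) :
    N1 a b r M' (some i) j =
      if hi : i = r then (if j = a ∨ j = b then 1 else 0)
      else if hj : j ≠ a ∧ j ≠ b then M'.1 ⟨i, hi⟩ ⟨j, hj⟩ else 0 := rfl

lemma N1_some_r (a b : Fin (k+2)) (r : Fin (k+1))
    (M' : S {i : Fin (k+1) // i ≠ r} {j : Fin (k+2) // j ≠ a ∧ j ≠ b}) (j : Fin (k+2)) :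
    N1 a b r M' (some r) j = if j = a ∨ j = b then 1 else 0 := by
  rw [N1_some, dif_pos rfl]

lemma N1_some_ne (a b : Fin (k+2)) (r : Fin (k+1))
    (M' : S {i : Fin (k+1) // i ≠ r} {j : Fin (k+2) // j ≠ a ∧ j ≠ b}) {i : Fin (k+1)}
    (hi : i ≠ r) (j : Fin (k+2)) :
    N1 a b r M' (some i) j =
      if hj : j ≠ a ∧ j ≠ b then M'.1 ⟨i, hi⟩ ⟨j, hj⟩ else 0 := by
  rw [N1_some, dif_neg hi]

lemma extend_cond1 {a b : Fin (k+2)} (hab : a ≠ b) (r : Fin (k+1))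
    (M' : S {i : Fin (k+1) // i ≠ r} {j : Fin (k+2) // j ≠ a ∧ j ≠ b}) :
    Cond (Option (Fin (k+1))) (Fin (k+2)) (N1 a b r M') := by
  refine ⟨?_, ?_, ?_⟩
  · rintro (_ | i) j
    · rw [N1_none]; split_ifs <;> omega
    · rcases eq_or_ne i r with rfl | hi
      · rw [N1_some_r]; split_ifs <;> omega
      · rw [N1_some_ne a b r M' hi]
        split_ifs with h
        · exact M'.2.1 _ _
        · omega
  · rintro (_ | i)
    · rw [Finset.sum_congr rfl (fun j _ => N1_none a b r M' j)]
      exact sum_ite_pair hab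
    · rcases eq_or_ne i r with rfl | hi
      · rw [Finset.sum_congr rfl (fun j _ => N1_some_r _ _ _ M' j)]
        exact sum_ite_pair hab
      · rw [Finset.sum_congr rfl (fun j _ => N1_some_ne a b r M' hi j),
          sum_dite_subtype]
        exact M'.2.2.1 ⟨i, hi⟩
  · intro j
    rw [Fintype.sum_option, N1_none,
      sum_eq_add_sum_ne (fun i => N1 a b r M' (some i) j) r, N1_some_r]
    by_cases hj : j ≠ a ∧ j ≠ b
    · have h0 : (if j = a ∨ j = b then (1:ℕ) else 0) = 0 := by
        simp [hj.1, hj.2]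
      rw [h0]
      have hterm : ∀ x : {i : Fin (k+1) // i ≠ r},
          N1 a b r M' (some ↑x) j = M'.1 x ⟨j, hj⟩ := by
        intro x
        rw [N1_some_ne a b r M' x.2, dif_pos hj]
      rw [Finset.sum_congr rfl (fun x _ => hterm x)]
      have := M'.2.2.2 ⟨j, hj⟩
      simpa using this
    · have h1 : (if j = a ∨ j = b then (1:ℕ) else 0) = 1 := by
        rcases Decidable.em (j = a ∨ j = b) with h | h
        · simp [h]
        · tauto
      rw [h1]
      have hterm : ∀ x : {i : Fin (k+1) // i ≠ r}, N1 a b r M' (some ↑x) j = 0 := by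
        intro x
        rw [N1_some_ne a b r M' x.2, dif_neg hj]
      rw [Finset.sum_congr rfl (fun x _ => hterm x), Finset.sum_const]
      simp

lemma restrict_cond (M : S (Option (Fin (k+1))) (Fin (k+2))) {a b : Fin (k+2)}
    (hab : a ≠ b) (ha : M.1 none a = 1) (hb : M.1 none b = 1)
    {r : Fin (k+1)} (hra : M.1 (some r) a = 1) (hrb : M.1 (some r) b = 1) :
    Cond {i : Fin (k+1) // i ≠ r} {j : Fin (k+2) // j ≠ a ∧ j ≠ b}
      (fun i j => M.1 (some i.1) j.1) := by
  have hstep : ∀ (c : Fin (k+2)) (hc : M.1 none c = 1), M.1 (some r) c = 1 →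
      ∀ i : Fin (k+1), i ≠ r → M.1 (some i) c = 0 := by
    intro c hc hrc i hir
    have hr' : r = otherRow M c hc := otherRow_uniq M c hc hrc
    exact otherRow_zero M c hc (by rw [← hr']; exact hir)
  have hrowr := pair_rigid (fun j => M.2.1 (some r) j) (M.2.2.1 (some r)) hab hra hrb
  have hrown := pair_rigid (fun j => M.2.1 none j) (M.2.2.1 none) hab ha hb
  refine ⟨fun i j => M.2.1 _ _, fun i => ?_, fun j => ?_⟩
  · have h2 := M.2.2.1 (some i.1)
    rw [sum_eq_add_add_sum_ne (fun j => M.1 (some i.1) j) hab] at h2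
    rw [hstep a ha hra i.1 i.2, hstep b hb hrb i.1 i.2] at h2
    simpa using h2
  · have h2 := M.2.2.2 j.1
    rw [Fintype.sum_option,
      sum_eq_add_sum_ne (fun i => M.1 (some i) j.1) r] at h2
    have h3 : M.1 none j.1 = 0 := by rw [hrown]; simp [j.2.1, j.2.2]
    have h4 : M.1 (some r) j.1 = 0 := by rw [hrowr]; simp [j.2.1, j.2.2]
    rw [h3, h4] at h2
    simpa using h2

/-- The backward (extension) map in case 1. -/
def g1 (q : TC1 k) : {x : T k // C1 x} :=
  ⟨⟨⟨N1 q.1.1.1.1 q.1.1.1.2 q.1.2 q.2, extend_cond1 q.1.1.2 q.1.2 q.2⟩,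
    ⟨q.1.1.1, q.1.1.2,
      by show N1 q.1.1.1.1 q.1.1.1.2 q.1.2 q.2 none q.1.1.1.1 = 1
         rw [N1_none]; simp,
      by show N1 q.1.1.1.1 q.1.1.1.2 q.1.2 q.2 none q.1.1.1.2 = 1
         rw [N1_none]; simp⟩⟩,
   ⟨q.1.2,
    by show N1 q.1.1.1.1 q.1.1.1.2 q.1.2 q.2 (some q.1.2) q.1.1.1.1 = 1
       rw [N1_some_r]; simp,
    by show N1 q.1.1.1.1 q.1.1.1.2 q.1.2 q.2 (some q.1.2) q.1.1.1.2 = 1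
       rw [N1_some_r]; simp⟩⟩

lemma g1_injective : Function.Injective (g1 (k := k)) := by
  rintro ⟨⟨⟨⟨a, b⟩, hab⟩, r⟩, M'⟩ ⟨⟨⟨⟨a', b'⟩, hab'⟩, r'⟩, M''⟩ h
  have hpair : (a, b) = (a', b') := congrArg (fun y => y.1.2.1) h
  have ha' : a = a' := congrArg Prod.fst hpair
  have hb' : b = b' := congrArg Prod.snd hpair
  subst ha'; subst hb'
  have hmat : N1 a b r M' = N1 a b r' M'' := congrArg (fun y => y.1.1.1) h
  have hr : r = r' := by
    by_contra hrr
    have h1 := congrFun (congrFun hmat (some r)) a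
    rw [N1_some_r, N1_some_ne a b r' M'' hrr, dif_neg (by simp)] at h1
    simp at h1
  subst hr
  have hM : M' = M'' := by
    apply Subtype.ext
    funext i j
    have h1 := congrFun (congrFun hmat (some i.1)) j.1
    rw [N1_some_ne a b r M' i.2, N1_some_ne a b r M'' i.2,
      dif_pos j.2, dif_pos j.2] at h1
    exact h1
  subst hM
  rfl

lemma g1_surjective : Function.Surjective (g1 (k := k)) := by
  rintro ⟨⟨M, ⟨⟨a, b⟩, hab, ha, hb⟩⟩, hC⟩
  set r := otherRow M a ha with hrdef
  have hra : M.1 (some r) a = 1 := otherRow_one M a ha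
  have hrb : M.1 (some r) b = 1 := by
    obtain ⟨i, hia, hib⟩ := hC
    rwa [otherRow_uniq M a ha hia] at hib
  have hrown := pair_rigid (fun j => M.2.1 none j) (M.2.2.1 none) hab ha hb
  have hrowr := pair_rigid (fun j => M.2.1 (some r) j) (M.2.2.1 (some r)) hab hra hrb
  have hrb' : r = otherRow M b hb := otherRow_uniq M b hb hrb
  refine ⟨⟨⟨⟨(a, b), hab⟩, r⟩,
    ⟨fun i j => M.1 (some i.1) j.1, restrict_cond M hab ha hb hra hrb⟩⟩, ?_⟩
  apply Subtype.ext
  have hN : N1 a b r ⟨fun i j => M.1 (some i.1) j.1, restrict_cond M hab ha hb hra hrb⟩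
      = M.1 := by
    funext i j
    rcases i with _ | i
    · rw [N1_none, hrown j]
    · rcases eq_or_ne i r with rfl | hi
      · rw [N1_some_r, hrowr j]
      · rw [N1_some_ne _ _ _ _ hi]
        by_cases hj : j ≠ a ∧ j ≠ b
        · rw [dif_pos hj]
        · rw [dif_neg hj]
          rcases Decidable.not_not.mp (by tauto : ¬¬(j = a ∨ j = b)) with rfl | rfl
          · exact (otherRow_zero M j ha (by rwa [← hrdef])).symm
          · exact (otherRow_zero M j hb (by rwa [← hrb'])).symm
  have hS : (⟨N1 a b r ⟨fun i j => M.1 (some i.1) j.1, restrict_cond M hab ha hb hra hrb⟩,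
      extend_cond1 hab r _⟩ : S (Option (Fin (k+1))) (Fin (k+2))) = M := Subtype.ext hN
  refine sigma_eq hS ?_
  rw [Subtype.heq_iff_coe_eq]
  intro p
  rw [hS]

lemma card_case1 : Nat.card {x : T k // C1 x} =
    ((k+2) * (k+2) - (k+2)) * (k+1) * H k := by
  have hcongr := Nat.card_congr
    (Equiv.ofBijective (g1 (k := k)) ⟨g1_injective, g1_surjective⟩)
  rw [← hcongr, TC1, natcard_sigma_const _ (H k) (fun q =>
    card_S_eq_H
      (by rw [card_ne_one]; simp)
      (by rw [card_ne_two q.1.2]; simp))]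
  rw [Nat.card_eq_fintype_card, Fintype.card_prod, card_offdiag, Fintype.card_fin,
    Fintype.card_fin, mul_comm, mul_assoc]

end Case1

/-! ### Extra sum helpers for case 2 -/

lemma sum_if_zero_eq {ι : Type*} [Fintype ι] [DecidableEq ι] (f : ι → ℕ) (b : ι) :
    (∑ x, if x = b then 0 else f x) + f b = ∑ x, f x := by
  have hsum : (∑ x, if x = b then f x else 0) = f b := by
    rw [Finset.sum_ite_eq' Finset.univ b f]; simp
  calc (∑ x, if x = b then 0 else f x) + f b
      = (∑ x, if x = b then 0 else f x) + ∑ x, (if x = b then f x else 0) := by rw [hsum]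
    _ = ∑ x, f x := by
        rw [← Finset.sum_add_distrib]
        exact Finset.sum_congr rfl (fun x _ => by split_ifs <;> simp)

lemma sum_coe_ite_one {β : Type*} [Fintype β] [DecidableEq β] {a c : β} (hc : c ≠ a) :
    (∑ x : {j : β // j ≠ a}, if (x : β) = c then (1:ℕ) else 0) = 1 := by
  have h : ∀ x : {j : β // j ≠ a},
      (if (x : β) = c then (1:ℕ) else 0) = if x = ⟨c, hc⟩ then 1 else 0 := by
    intro x
    by_cases hx : (x : β) = c
    · rw [if_pos hx, if_pos (Subtype.ext hx)]
    · rw [if_neg hx, if_neg (fun hh => hx (by rw [hh]))]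
  rw [Finset.sum_congr rfl (fun x _ => h x),
    Finset.sum_ite_eq' Finset.univ (⟨c, hc⟩ : {j : β // j ≠ a}) (fun _ => 1)]
  simp

section Case2
variable {k : ℕ}

def TC2 (k : ℕ) :=
  Σ a : Fin (k+2), Σ w : S (Fin (k+1)) {j : Fin (k+2) // j ≠ a} × Fin (k+1),
    {b : {j : Fin (k+2) // j ≠ a} // w.1.1 w.2 b = 1}

instance : Finite (TC2 k) := by unfold TC2; infer_instance

/-- The extension matrix in case 2. -/
def N2 (a : Fin (k+2)) (r : Fin (k+1)) (b : {j : Fin (k+2) // j ≠ a})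
    (M' : S (Fin (k+1)) {j : Fin (k+2) // j ≠ a}) :
    Option (Fin (k+1)) → Fin (k+2) → ℕ
  | none, j => if j = a ∨ j = b.1 then 1 else 0
  | some i, j =>
      if hj : j = a then (if i = r then 1 else 0)
      else if i = r ∧ j = b.1 then 0 else M'.1 i ⟨j, hj⟩

lemma N2_none (a : Fin (k+2)) (r : Fin (k+1)) (b : {j : Fin (k+2) // j ≠ a})
    (M' : S (Fin (k+1)) {j : Fin (k+2) // j ≠ a}) (j : Fin (k+2)) :
    N2 a r b M' none j = if j = a ∨ j = b.1 then 1 else 0 := rfl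

lemma N2_some (a : Fin (k+2)) (r : Fin (k+1)) (b : {j : Fin (k+2) // j ≠ a})
    (M' : S (Fin (k+1)) {j : Fin (k+2) // j ≠ a}) (i : Fin (k+1)) (j : Fin (k+2)) :
    N2 a r b M' (some i) j =
      if hj : j = a then (if i = r then 1 else 0)
      else if i = r ∧ j = b.1 then 0 else M'.1 i ⟨j, hj⟩ := rfl

lemma N2_some_a (a : Fin (k+2)) (r : Fin (k+1)) (b : {j : Fin (k+2) // j ≠ a})
    (M' : S (Fin (k+1)) {j : Fin (k+2) // j ≠ a}) (i : Fin (k+1)) :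
    N2 a r b M' (some i) a = if i = r then 1 else 0 := by
  rw [N2_some, dif_pos rfl]

lemma N2_some_ne (a : Fin (k+2)) (r : Fin (k+1)) (b : {j : Fin (k+2) // j ≠ a})
    (M' : S (Fin (k+1)) {j : Fin (k+2) // j ≠ a}) (i : Fin (k+1)) {j : Fin (k+2)}
    (hj : j ≠ a) :
    N2 a r b M' (some i) j =
      if i = r ∧ j = b.1 then 0 else M'.1 i ⟨j, hj⟩ := by
  rw [N2_some, dif_neg hj]

lemma extend_cond2 (a : Fin (k+2)) (r : Fin (k+1)) (b : {j : Fin (k+2) // j ≠ a})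
    (M' : S (Fin (k+1)) {j : Fin (k+2) // j ≠ a}) (h1 : M'.1 r b = 1) :
    Cond (Option (Fin (k+1))) (Fin (k+2)) (N2 a r b M') := by
  have hab : a ≠ b.1 := Ne.symm b.2
  refine ⟨?_, ?_, ?_⟩
  · rintro (_ | i) j
    · rw [N2_none]; split_ifs <;> omega
    · rw [N2_some]; split_ifs with h h' h''
      · omega
      · omega
      · omega
      · exact M'.2.1 _ _
  · rintro (_ | i)
    · rw [Finset.sum_congr rfl (fun j _ => N2_none a r b M' j)]
      exact sum_ite_pair hab
    · rw [sum_eq_add_sum_ne (fun j => N2 a r b M' (some i) j) a, N2_some_a]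
      have hterm : ∀ x : {j : Fin (k+2) // j ≠ a},
          N2 a r b M' (some i) ↑x = if i = r ∧ x = b then 0 else M'.1 i x := by
        intro x
        rw [N2_some_ne a r b M' i x.2]
        congr 1
        · rw [eq_iff_iff]
          constructor
          · rintro ⟨h', h''⟩; exact ⟨h', Subtype.ext h''⟩
          · rintro ⟨h', h''⟩; exact ⟨h', by rw [h'']⟩
      rw [Finset.sum_congr rfl (fun x _ => hterm x)]
      rcases eq_or_ne i r with rfl | hi
      · have hsplit : ∀ x : {j : Fin (k+2) // j ≠ a},
            (if i = i ∧ x = b then (0:ℕ) else M'.1 i x) =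
            if x = b then 0 else M'.1 i x := by
          intro x; simp
        rw [Finset.sum_congr rfl (fun x _ => hsplit x), if_pos rfl]
        have := sum_if_zero_eq (M'.1 i) b
        rw [M'.2.2.1 i, h1] at this
        omega
      · have hsplit : ∀ x : {j : Fin (k+2) // j ≠ a},
            (if i = r ∧ x = b then (0:ℕ) else M'.1 i x) = M'.1 i x := by
          intro x; simp [hi]
        rw [Finset.sum_congr rfl (fun x _ => hsplit x), if_neg hi, M'.2.2.1 i]
  · intro j
    rw [Fintype.sum_option, N2_none]
    by_cases hja : j = a
    · subst hja
      rw [if_pos (Or.inl rfl)]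
      have hterm : ∀ i, N2 j r b M' (some i) j = if i = r then 1 else 0 :=
        fun i => N2_some_a j r b M' i
      rw [Finset.sum_congr rfl (fun i _ => hterm i),
        Finset.sum_ite_eq' Finset.univ r (fun _ => 1)]
      simp
    · have hterm : ∀ i, N2 a r b M' (some i) j =
          if i = r ∧ j = b.1 then 0 else M'.1 i ⟨j, hja⟩ :=
        fun i => N2_some_ne a r b M' i hja
      rw [Finset.sum_congr rfl (fun i _ => hterm i)]
      by_cases hjb : j = b.1
      · have hb' : (⟨j, hja⟩ : {j : Fin (k+2) // j ≠ a}) = b := Subtype.ext hjb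
        rw [if_pos (Or.inr hjb)]
        have hsplit : ∀ i, (if i = r ∧ j = b.1 then (0:ℕ) else M'.1 i ⟨j, hja⟩) =
            if i = r then 0 else M'.1 i b := by
          intro i; rw [hb']; simp [hjb]
        rw [Finset.sum_congr rfl (fun i _ => hsplit i)]
        have := sum_if_zero_eq (fun i => M'.1 i b) r
        rw [M'.2.2.2 b, h1] at this
        omega
      · rw [if_neg (by simp [hja, hjb])]
        have hsplit : ∀ i, (if i = r ∧ j = b.1 then (0:ℕ) else M'.1 i ⟨j, hja⟩) =
            M'.1 i ⟨j, hja⟩ := by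
          intro i; simp [hjb]
        rw [Finset.sum_congr rfl (fun i _ => hsplit i)]
        simpa using M'.2.2.2 ⟨j, hja⟩

/-- The backward (extension) map in case 2. -/
def g2 (q : TC2 k) : {x : T k // ¬ C1 x} :=
  ⟨⟨⟨N2 q.1 q.2.1.2 q.2.2.1 q.2.1.1, extend_cond2 q.1 q.2.1.2 q.2.2.1 q.2.1.1 q.2.2.2⟩,
    ⟨(q.1, q.2.2.1.1), Ne.symm q.2.2.1.2,
      by show N2 q.1 q.2.1.2 q.2.2.1 q.2.1.1 none q.1 = 1
         rw [N2_none]; simp,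
      by show N2 q.1 q.2.1.2 q.2.2.1 q.2.1.1 none q.2.2.1.1 = 1
         rw [N2_none]; simp⟩⟩,
   by
    rintro ⟨i, hia, hib⟩
    have hia' : N2 q.1 q.2.1.2 q.2.2.1 q.2.1.1 (some i) q.1 = 1 := hia
    have hib' : N2 q.1 q.2.1.2 q.2.2.1 q.2.1.1 (some i) q.2.2.1.1 = 1 := hib
    rw [N2_some_a] at hia'
    split_ifs at hia' with hir
    subst hir
    rw [N2_some_ne _ _ _ _ _ q.2.2.1.2, if_pos ⟨rfl, rfl⟩] at hib'
    exact absurd hib' (by norm_num)⟩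

end Case2

section Case2b
variable {k : ℕ}

lemma g2_injective : Function.Injective (g2 (k := k)) := by
  rintro ⟨a, ⟨⟨M', r⟩, ⟨b, h1⟩⟩⟩ ⟨a', ⟨⟨M'', r'⟩, ⟨b', h1'⟩⟩⟩ h
  have hpair : (a, b.1) = (a', b'.1) := congrArg (fun y => y.1.2.1) h
  have ha' : a = a' := congrArg Prod.fst hpair
  subst ha'
  have hb' : b = b' := Subtype.ext (congrArg Prod.snd hpair)
  subst hb'
  have hmat : N2 a r b M' = N2 a r' b M'' := congrArg (fun y => y.1.1.1) h
  have hr : r = r' := by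
    have h2 := congrFun (congrFun hmat (some r)) a
    rw [N2_some_a, N2_some_a, if_pos rfl] at h2
    by_contra hrr
    rw [if_neg hrr] at h2
    omega
  subst hr
  have hM : M' = M'' := by
    apply Subtype.ext
    funext i j
    have h2 := congrFun (congrFun hmat (some i)) j.1
    rw [N2_some_ne _ _ _ _ _ j.2, N2_some_ne _ _ _ _ _ j.2] at h2
    by_cases hg : i = r ∧ j.1 = b.1
    · obtain ⟨rfl, hjb⟩ := hg
      have hj : j = b := Subtype.ext hjb
      rw [hj, h1, h1']
    · rw [if_neg hg, if_neg hg] at h2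
      have : (⟨j.1, j.2⟩ : {j : Fin (k+2) // j ≠ a}) = j := rfl
      rw [this] at h2
      exact h2
  subst hM
  rfl

lemma g2_surjective : Function.Surjective (g2 (k := k)) := by
  rintro ⟨⟨M, ⟨⟨a, b⟩, hab, ha, hb⟩⟩, hnC⟩
  simp only [C1, not_exists] at hnC
  replace hab : a ≠ b := hab
  replace ha : M.1 none a = 1 := ha
  replace hb : M.1 none b = 1 := hb
  set r := otherRow M a ha with hrdef
  have hra : M.1 (some r) a = 1 := otherRow_one M a ha
  have hrb0 : M.1 (some r) b = 0 := by
    have hne : M.1 (some r) b ≠ 1 := fun hh => hnC r ⟨hra, hh⟩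
    have := M.2.1 (some r) b
    omega
  have hrown := pair_rigid (fun j => M.2.1 none j) (M.2.2.1 none) hab ha hb
  have hcol0 : ∀ i : Fin (k+1), i ≠ r → M.1 (some i) a = 0 := by
    intro i hi
    exact otherRow_zero M a ha (by rwa [← hrdef])
  -- the contracted matrix
  set F : Fin (k+1) → {j : Fin (k+2) // j ≠ a} → ℕ :=
    fun i j => M.1 (some i) j.1 + if i = r ∧ j.1 = b then 1 else 0 with hF
  have hcond : Cond (Fin (k+1)) {j : Fin (k+2) // j ≠ a} F := by
    refine ⟨?_, ?_, ?_⟩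
    · intro i j
      by_cases hg : i = r ∧ j.1 = b
      · have hz : M.1 (some i) j.1 = 0 := by
          obtain ⟨rfl, h2⟩ := hg
          rw [h2]
          exact hrb0
        simp [hF, hg, hz, hrb0]
      · simp [hF, hg]
        exact M.2.1 _ _
    · intro i
      have hsplit : ∑ x : {j : Fin (k+2) // j ≠ a}, F i x =
          (∑ x : {j : Fin (k+2) // j ≠ a}, M.1 (some i) x.1)
          + ∑ x : {j : Fin (k+2) // j ≠ a}, (if i = r ∧ x.1 = b then (1:ℕ) else 0) :=
        Finset.sum_add_distrib
      have hrow := M.2.2.1 (some i)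
      rw [sum_eq_add_sum_ne (fun j => M.1 (some i) j) a] at hrow
      rcases eq_or_ne i r with rfl | hi
      · have h2 : ∑ x : {j : Fin (k+2) // j ≠ a}, M.1 (some r) x.1 = 1 := by omega
        have h3 : ∀ x : {j : Fin (k+2) // j ≠ a},
            (if r = r ∧ x.1 = b then (1:ℕ) else 0) = if (x : Fin (k+2)) = b then 1 else 0 := by
          intro x; simp
        rw [hsplit, h2, Finset.sum_congr rfl (fun x _ => h3 x),
          sum_coe_ite_one (Ne.symm hab)]
      · have h2 : ∑ x : {j : Fin (k+2) // j ≠ a}, M.1 (some i) x.1 = 2 := by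
          have := hcol0 i hi; omega
        have h3 : ∀ x : {j : Fin (k+2) // j ≠ a},
            (if i = r ∧ x.1 = b then (1:ℕ) else 0) = 0 := by
          intro x; simp [hi]
        rw [hsplit, h2, Finset.sum_congr rfl (fun x _ => h3 x), Finset.sum_const]
        simp
    · intro j
      have hsplit : ∑ i, F i j =
          (∑ i, M.1 (some i) j.1) + ∑ i, (if i = r ∧ j.1 = b then (1:ℕ) else 0) :=
        Finset.sum_add_distrib
      have hcol := M.2.2.2 j.1
      rw [Fintype.sum_option] at hcol
      have hnoneb : M.1 none b = 1 := hb
      by_cases hjb : j.1 = b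
      · have h2 : ∑ i, M.1 (some i) j.1 = 1 := by
          rw [hjb] at hcol ⊢
          omega
        have h3 : ∀ i, (if i = r ∧ j.1 = b then (1:ℕ) else 0) = if i = r then 1 else 0 := by
          intro i; simp [hjb]
        rw [hsplit, h2, Finset.sum_congr rfl (fun i _ => h3 i),
          Finset.sum_ite_eq' Finset.univ r (fun _ => 1)]
        simp
      · have hn0 : M.1 none j.1 = 0 := by rw [hrown]; simp [j.2, hjb]
        have h2 : ∑ i, M.1 (some i) j.1 = 2 := by omega
        have h3 : ∀ i, (if i = r ∧ j.1 = b then (1:ℕ) else 0) = 0 := by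
          intro i; simp [hjb]
        rw [hsplit, h2, Finset.sum_congr rfl (fun i _ => h3 i), Finset.sum_const]
        simp
  have hFrb : F r ⟨b, Ne.symm hab⟩ = 1 := by
    simp [hF, hrb0]
  refine ⟨⟨a, ⟨(⟨F, hcond⟩, r), ⟨⟨b, Ne.symm hab⟩, hFrb⟩⟩⟩, ?_⟩
  apply Subtype.ext
  have hN : N2 a r ⟨b, Ne.symm hab⟩ ⟨F, hcond⟩ = M.1 := by
    funext i j
    rcases i with _ | i
    · rw [N2_none, hrown j]
    · by_cases hja : j = a
      · subst hja
        rw [N2_some_a]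
        rcases eq_or_ne i r with rfl | hi
        · rw [if_pos rfl, hra]
        · rw [if_neg hi, hcol0 i hi]
      · rw [N2_some_ne _ _ _ _ _ hja]
        by_cases hg : i = r ∧ j = b
        · obtain ⟨rfl, rfl⟩ := hg
          rw [if_pos ⟨rfl, rfl⟩, hrb0]
        · rw [if_neg (by simpa using hg)]
          show M.1 (some i) j + (if i = r ∧ j = b then 1 else 0) = M.1 (some i) j
          rw [if_neg hg, Nat.add_zero]
  have hS : (⟨N2 a r ⟨b, Ne.symm hab⟩ ⟨F, hcond⟩,
      extend_cond2 a r ⟨b, Ne.symm hab⟩ ⟨F, hcond⟩ hFrb⟩ :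
      S (Option (Fin (k+1))) (Fin (k+2))) = M := Subtype.ext hN
  refine sigma_eq hS ?_
  rw [Subtype.heq_iff_coe_eq]
  intro p
  rw [hS]

lemma card_case2 : Nat.card {x : T k // ¬ C1 x} =
    2 * ((k+1) * H (k+1)) * (k+2) := by
  have hcongr := Nat.card_congr
    (Equiv.ofBijective (g2 (k := k)) ⟨g2_injective, g2_surjective⟩)
  rw [← hcongr, TC2]
  rw [natcard_sigma_const _ (2 * ((k+1) * H (k+1))) (fun a => ?_)]
  · rw [Nat.card_eq_fintype_card, Fintype.card_fin]
  · rw [natcard_sigma_const _ 2 (fun w =>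
      card_support_two (fun b => w.1.2.1 w.2 b) (w.1.2.2.1 w.2))]
    congr 1
    rw [Nat.card_prod, Nat.card_eq_fintype_card (α := Fin (k+1)), Fintype.card_fin,
      card_S_eq_H (n := k+1) (by simp) (by rw [card_ne_one]; simp)]
    ring

end Case2b

/-! ### The recurrence and base cases -/

lemma key (k : ℕ) :
    2 * H (k+2) = 2 * (k+2) * (k+1) * H (k+1) + (k+2) * (k+1)^2 * H k := by
  have h := natcard_split (T k) C1
  rw [card_T, card_case1, card_case2] at h
  have hsub : (k+2) * (k+2) - (k+2) = (k+2) * (k+1) := by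
    have : (k+2) * (k+2) = (k+2) * (k+1) + (k+2) := by ring
    omega
  rw [hsub] at h
  rw [h]; ring

lemma H_zero : H 0 = 1 := by
  rw [H_eq]
  letI : Unique (S (Fin 0) (Fin 0)) :=
    { default := ⟨fun i => i.elim0, fun i => i.elim0, fun i => i.elim0, fun j => j.elim0⟩
      uniq := fun M => Subtype.ext (funext fun i => i.elim0) }
  exact Nat.card_unique

lemma H_one : H 1 = 0 := by
  rw [H_eq]
  have : IsEmpty (S (Fin 1) (Fin 1)) := by
    refine ⟨fun M => ?_⟩
    have h2 := M.2.2.1 0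
    rw [Fin.sum_univ_one] at h2
    have := M.2.1 0 0
    omega
  exact Nat.card_of_isEmpty

lemma H_two : H 2 = 1 := by
  have h := key 0
  norm_num [H_zero, H_one] at h
  omega

lemma H_three : H 3 = 6 := by
  have h := key 1
  norm_num [H_two, H_one] at h
  omega

end H13

theorem stmt_13 :
    (∀ n : ℕ, 2 ≤ n → 2 * H n = 2 * n * (n - 1) * H (n - 1) + n * (n - 1) ^ 2 * H (n - 2)) ∧
    H 0 = 1 ∧ H 1 = 0 ∧ H 2 = 1 ∧ H 3 = 6 := by
  refine ⟨?_, H13.H_zero, H13.H_one, H13.H_two, H13.H_three⟩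
  intro n hn
  obtain ⟨k, rfl⟩ : ∃ k, n = k + 2 := ⟨n - 2, by omega⟩
  have e1 : k + 2 - 1 = k + 1 := by omega
  have e2 : k + 2 - 2 = k := by omega
  rw [e1, e2]
  exact H13.key k
end
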